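/- arXiv:1707.02876 — 2 statements merged into one kernel-verified Lean document; each statement's English description precedes it below -/
import Mathlib

section
/- (Exactness of the weighted online DMD inverse-Gram update.) Let 0 < ρ ≤ 1, let x₁,…,x_{k+1} be vectors in ℝⁿ, and suppose G_k = Σ_{i=1}^k ρ^{k−i} xᵢ xᵢᵀ is positive definite. Set P̂_k = ρ⁻¹ G_k⁻¹ and γ_{k+1} = 1/(1 + x_{k+1}ᵀ P̂_k x_{k+1}). Then G_{k+1} = Σ_{i=1}^{k+1} ρ^{k+1−i} xᵢ xᵢᵀ is invertible and ρ⁻¹ (P̂_k − γ_{k+1} P̂_k x_{k+1} x_{k+1}ᵀ P̂_k) = ρ⁻¹ G_{k+1}⁻¹. -/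
/-!
Splitting off the last summand gives `G_{k+1} = ρ G_k + x_{k+1} x_{k+1}ᵀ`, a rank-one update of
the positive definite matrix `ρ G_k`, whose inverse is `P̂_k`. The Sherman–Morrison formula
inverts such an update as soon as `1 + x_{k+1}ᵀ P̂_k x_{k+1} ≠ 0`, and here this quantity is at
least `1` because `P̂_k` is positive definite.
-/

namespace Matrix

variable {n K : Type*} [Fintype n] [DecidableEq n] [Field K]

theorem inv_sub_smul_mul_vecMulVec_mul_mul_add_vecMulVec {A : Matrix n n K} (hA : IsUnit A)
    (u v : n → K) (h : 1 + v ⬝ᵥ A⁻¹ *ᵥ u ≠ 0) :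
    (A⁻¹ - (1 + v ⬝ᵥ A⁻¹ *ᵥ u)⁻¹ • (A⁻¹ * vecMulVec u v * A⁻¹)) * (A + vecMulVec u v) = 1 := by
  have hAA : A⁻¹ * A = 1 := nonsing_inv_mul A ((isUnit_iff_isUnit_det A).mp hA)
  -- `vᵀ A⁻¹ u` is a scalar, so the rank-one term reproduces itself when multiplied by `u vᵀ`.
  have hrank : A⁻¹ * vecMulVec u v * A⁻¹ * vecMulVec u v =
      (v ⬝ᵥ A⁻¹ *ᵥ u) • (A⁻¹ * vecMulVec u v) := by
    rw [Matrix.mul_assoc _ A⁻¹, mul_vecMulVec A⁻¹, vecMulVec_mul_vecMulVec, vecMulVec_smul]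
  calc (A⁻¹ - (1 + v ⬝ᵥ A⁻¹ *ᵥ u)⁻¹ • (A⁻¹ * vecMulVec u v * A⁻¹)) * (A + vecMulVec u v)
      = 1 + A⁻¹ * vecMulVec u v - (1 + v ⬝ᵥ A⁻¹ *ᵥ u)⁻¹ •
          ((1 + v ⬝ᵥ A⁻¹ *ᵥ u) • (A⁻¹ * vecMulVec u v)) := by
        rw [sub_mul, mul_add, mul_add, hAA, smul_mul, smul_mul, Matrix.mul_assoc _ A⁻¹ A, hAA,
          mul_one, hrank, ← smul_add, add_smul, one_smul]
    _ = 1 := by rw [smul_smul, inv_mul_cancel₀ h, one_smul, add_sub_cancel_right]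

theorem isUnit_add_vecMulVec {A : Matrix n n K} (hA : IsUnit A) (u v : n → K)
    (h : 1 + v ⬝ᵥ A⁻¹ *ᵥ u ≠ 0) : IsUnit (A + vecMulVec u v) :=
  (isUnit_iff_isUnit_det _).mpr
    (isUnit_det_of_left_inverse (inv_sub_smul_mul_vecMulVec_mul_mul_add_vecMulVec hA u v h))

theorem inv_add_vecMulVec {A : Matrix n n K} (hA : IsUnit A) (u v : n → K)
    (h : 1 + v ⬝ᵥ A⁻¹ *ᵥ u ≠ 0) :
    (A + vecMulVec u v)⁻¹ = A⁻¹ - (1 + v ⬝ᵥ A⁻¹ *ᵥ u)⁻¹ • (A⁻¹ * vecMulVec u v * A⁻¹) :=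
  inv_eq_left_inv (inv_sub_smul_mul_vecMulVec_mul_mul_add_vecMulVec hA u v h)

end Matrix

theorem Fin.sum_univ_pow_sub_smul_succ {R M : Type*} [Monoid R] [AddCommMonoid M]
    [DistribMulAction R M] (ρ : R) (k : ℕ) (f : Fin (k + 1) → M) :
    ∑ i : Fin (k + 1), ρ ^ (k - (i : ℕ)) • f i =
      ρ • ∑ i : Fin k, ρ ^ (k - 1 - (i : ℕ)) • f i.castSucc + f (Fin.last k) := by
  rw [Fin.sum_univ_castSucc, Fin.val_last, Nat.sub_self, pow_zero, one_smul, Finset.smul_sum]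
  congr 1
  refine Finset.sum_congr rfl fun i _ => ?_
  rw [smul_smul, ← pow_succ', Fin.val_castSucc]
  congr 2
  omega

open Matrix

theorem weighted_online_dmd_gram_update_exact_general (n k : ℕ) (ρ : ℝ)
    (hρ0 : 0 < ρ) (x : Fin (k + 1) → (Fin n → ℝ))
    (hG : (∑ i : Fin k, ρ ^ (k - 1 - (i : ℕ)) •
        vecMulVec (x i.castSucc) (x i.castSucc)).PosDef) :
    IsUnit (∑ i : Fin (k + 1), ρ ^ (k - (i : ℕ)) • vecMulVec (x i) (x i)) ∧
    ρ⁻¹ • ((ρ⁻¹ • (∑ i : Fin k, ρ ^ (k - 1 - (i : ℕ)) •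
          vecMulVec (x i.castSucc) (x i.castSucc))⁻¹) -
        (1 / (1 + x (Fin.last k) ⬝ᵥ
            (ρ⁻¹ • (∑ i : Fin k, ρ ^ (k - 1 - (i : ℕ)) •
              vecMulVec (x i.castSucc) (x i.castSucc))⁻¹).mulVec (x (Fin.last k)))) •
          ((ρ⁻¹ • (∑ i : Fin k, ρ ^ (k - 1 - (i : ℕ)) •
              vecMulVec (x i.castSucc) (x i.castSucc))⁻¹) *
            vecMulVec (x (Fin.last k)) (x (Fin.last k)) *
            (ρ⁻¹ • (∑ i : Fin k, ρ ^ (k - 1 - (i : ℕ)) •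
              vecMulVec (x i.castSucc) (x i.castSucc))⁻¹))) =
      ρ⁻¹ • (∑ i : Fin (k + 1), ρ ^ (k - (i : ℕ)) • vecMulVec (x i) (x i))⁻¹ := by
  set G := ∑ i : Fin k, ρ ^ (k - 1 - (i : ℕ)) • vecMulVec (x i.castSucc) (x i.castSucc)
  set v := x (Fin.last k)
  have hrec : ∑ i : Fin (k + 1), ρ ^ (k - (i : ℕ)) • vecMulVec (x i) (x i) =
      ρ • G + vecMulVec v v :=
    Fin.sum_univ_pow_sub_smul_succ ρ k fun i => vecMulVec (x i) (x i)
  have hρG : (ρ • G).PosDef := hG.smul hρ0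
  have hinv : (ρ • G)⁻¹ = ρ⁻¹ • G⁻¹ := by
    have := invertibleOfNonzero hρ0.ne'
    rw [Matrix.inv_smul G ρ ((isUnit_iff_isUnit_det G).mp hG.isUnit), invOf_eq_inv]
  have hden : 1 + v ⬝ᵥ (ρ • G)⁻¹ *ᵥ v ≠ 0 := by
    have := hρG.inv.posSemidef.dotProduct_mulVec_nonneg v
    rw [star_trivial] at this
    positivity
  rw [hrec, ← hinv, one_div, inv_add_vecMulVec hρG.isUnit v v hden]
  exact ⟨isUnit_add_vecMulVec hρG.isUnit v v hden, rfl⟩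

/-- Exactness of the weighted online DMD inverse-Gram update: with
`G_k = Σ_{i=1}^k ρ^{k−i} xᵢ xᵢᵀ` positive definite, `P̂_k = ρ⁻¹ G_k⁻¹`, and
`γ = 1/(1 + x_{k+1}ᵀ P̂_k x_{k+1})`, the matrix `G_{k+1}` is invertible and
`ρ⁻¹ (P̂_k − γ P̂_k x_{k+1} x_{k+1}ᵀ P̂_k) = ρ⁻¹ G_{k+1}⁻¹`. -/
theorem weighted_online_dmd_gram_update_exact (n k : ℕ) (ρ : ℝ)
    (hρ0 : 0 < ρ) (hρ1 : ρ ≤ 1) (x : Fin (k + 1) → (Fin n → ℝ))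
    (hG : (∑ i : Fin k, ρ ^ (k - 1 - (i : ℕ)) •
        vecMulVec (x i.castSucc) (x i.castSucc)).PosDef) :
    IsUnit (∑ i : Fin (k + 1), ρ ^ (k - (i : ℕ)) • vecMulVec (x i) (x i)) ∧
    ρ⁻¹ • ((ρ⁻¹ • (∑ i : Fin k, ρ ^ (k - 1 - (i : ℕ)) •
          vecMulVec (x i.castSucc) (x i.castSucc))⁻¹) -
        (1 / (1 + x (Fin.last k) ⬝ᵥ
            (ρ⁻¹ • (∑ i : Fin k, ρ ^ (k - 1 - (i : ℕ)) •
              vecMulVec (x i.castSucc) (x i.castSucc))⁻¹).mulVec (x (Fin.last k)))) •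
          ((ρ⁻¹ • (∑ i : Fin k, ρ ^ (k - 1 - (i : ℕ)) •
              vecMulVec (x i.castSucc) (x i.castSucc))⁻¹) *
            vecMulVec (x (Fin.last k)) (x (Fin.last k)) *
            (ρ⁻¹ • (∑ i : Fin k, ρ ^ (k - 1 - (i : ℕ)) •
              vecMulVec (x i.castSucc) (x i.castSucc))⁻¹))) =
      ρ⁻¹ • (∑ i : Fin (k + 1), ρ ^ (k - (i : ℕ)) • vecMulVec (x i) (x i))⁻¹ :=
  weighted_online_dmd_gram_update_exact_general n k ρ hρ0 x hG
end

section
/- (Exactness of the windowed DMD inverse-Gram update.) Let w ≥ n and x_{k−w+1},…,x_{k+1} ∈ ℝⁿ, with X_k = [x_{k−w+1} ⋯ x_k] and X_{k+1} = [x_{k−w+2} ⋯ x_{k+1}] the n×w window matrices, and assume rank X_k = n and rank X_{k+1} = n. Set P_k = (X_k X_kᵀ)⁻¹, U = [x_{k−w+1} x_{k+1}], C = diag(−1, 1). Then C⁻¹ + Uᵀ P_k U is invertible, and with Γ_{k+1} = (C⁻¹ + Uᵀ P_k U)⁻¹ one has P_k − P_k U Γ_{k+1} Uᵀ P_k = (X_{k+1}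 X_{k+1}ᵀ)⁻¹. -/
open Matrix

/-- The window data matrix at step `k`: columns are the first `w` of the `w+1` snapshots. -/
def windowOld {n w : ℕ} (x : Fin (w + 1) → (Fin n → ℝ)) : Matrix (Fin n) (Fin w) ℝ :=
  Matrix.of fun i j => x j.castSucc i

/-- The window data matrix at step `k+1`: columns are the last `w` of the `w+1` snapshots. -/
def windowNew {n w : ℕ} (x : Fin (w + 1) → (Fin n → ℝ)) : Matrix (Fin n) (Fin w) ℝ :=
  Matrix.of fun i j => x j.succ i

/-- The `n × 2` matrix with columns `u` and `v`. -/
def twoCols {n : ℕ} (u v : Fin n → ℝ) : Matrix (Fin n) (Fin 2) ℝ :=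
  Matrix.of fun i j => ![u i, v i] j

/-- A square real matrix of full rank is a unit. -/
lemma isUnit_of_rank_eq_card {m : ℕ} (M : Matrix (Fin m) (Fin m) ℝ) (h : M.rank = m) :
    IsUnit M := by
  rw [← Matrix.mulVec_surjective_iff_isUnit]
  have : LinearMap.range M.mulVecLin = ⊤ := by
    apply Submodule.eq_top_of_finrank_eq
    rw [← Matrix.rank, h]
    simp [Module.finrank_fintype_fun_eq_card]
  intro y
  have := this ▸ LinearMap.mem_range (f := M.mulVecLin) (x := y)
  exact (this.symm.mpr Submodule.mem_top)

/-- The rank-two Gram update identity. -/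
lemma gram_update {n w : ℕ} (x : Fin (w + 1) → (Fin n → ℝ)) :
    windowNew x * (windowNew x)ᵀ =
      windowOld x * (windowOld x)ᵀ +
        twoCols (x 0) (x (Fin.last w)) * Matrix.diagonal ![(-1 : ℝ), 1] *
          (twoCols (x 0) (x (Fin.last w)))ᵀ := by
  ext i i'
  simp only [Matrix.add_apply, Matrix.mul_apply, Matrix.transpose_apply,
    Matrix.diagonal_apply, windowOld, windowNew, twoCols, Matrix.of_apply,
    Fin.sum_univ_two]
  have key : ∀ f : Fin (w + 1) → ℝ,
      f 0 + ∑ j : Fin w, f j.succ = (∑ j : Fin w, f j.castSucc) + f (Fin.last w) := by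
    intro f
    rw [← Fin.sum_univ_succ f, Fin.sum_univ_castSucc f]
  have := key (fun j => x j i * x j i')
  norm_num
  linarith [this]

/-- Exactness of the windowed DMD inverse-Gram update: with `P_k = (X_k X_kᵀ)⁻¹`,
`U = [x_{k−w+1} x_{k+1}]`, `C = diag(−1,1)`, `Γ = (C⁻¹ + Uᵀ P_k U)⁻¹`, one has
`P_k − P_k U Γ Uᵀ P_k = (X_{k+1} X_{k+1}ᵀ)⁻¹`. -/
theorem windowed_dmd_gram_update_exact (n w : ℕ) (hw : n ≤ w)
    (x : Fin (w + 1) → (Fin n → ℝ))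
    (hXk : (windowOld x).rank = n) (hXk1 : (windowNew x).rank = n) :
    IsUnit ((Matrix.diagonal ![(-1 : ℝ), 1])⁻¹ +
        (twoCols (x 0) (x (Fin.last w)))ᵀ * (windowOld x * (windowOld x)ᵀ)⁻¹ *
          twoCols (x 0) (x (Fin.last w))) ∧
    (windowOld x * (windowOld x)ᵀ)⁻¹ -
        (windowOld x * (windowOld x)ᵀ)⁻¹ * twoCols (x 0) (x (Fin.last w)) *
          ((Matrix.diagonal ![(-1 : ℝ), 1])⁻¹ +
            (twoCols (x 0) (x (Fin.last w)))ᵀ * (windowOld x * (windowOld x)ᵀ)⁻¹ *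
              twoCols (x 0) (x (Fin.last w)))⁻¹ *
          (twoCols (x 0) (x (Fin.last w)))ᵀ * (windowOld x * (windowOld x)ᵀ)⁻¹ =
      (windowNew x * (windowNew x)ᵀ)⁻¹ := by
  set A := windowOld x * (windowOld x)ᵀ with hA_def
  set B := windowNew x * (windowNew x)ᵀ with hB_def
  set U := twoCols (x 0) (x (Fin.last w)) with hU_def
  set C := Matrix.diagonal ![(-1 : ℝ), 1] with hC_def
  -- A and B are units
  have hrankA : A.rank = n := by
    rw [hA_def, ← Matrix.conjTranspose_eq_transpose_of_trivial,
      Matrix.rank_self_mul_conjTranspose]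
    exact hXk
  have hrankB : B.rank = n := by
    rw [hB_def, ← Matrix.conjTranspose_eq_transpose_of_trivial,
      Matrix.rank_self_mul_conjTranspose]
    exact hXk1
  have hA : IsUnit A := isUnit_of_rank_eq_card A hrankA
  have hB : IsUnit B := isUnit_of_rank_eq_card B hrankB
  have hC : IsUnit C := by
    rw [Matrix.isUnit_iff_isUnit_det, Matrix.det_diagonal]
    norm_num
  have hBeq : B = A + U * C * Uᵀ := gram_update x
  -- invertibility of the capacitance matrix
  have hdetA : IsUnit A.det := (Matrix.isUnit_iff_isUnit_det A).mp hA
  have hdetB : IsUnit B.det := (Matrix.isUnit_iff_isUnit_det B).mp hB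
  have hdetC : IsUnit C.det := (Matrix.isUnit_iff_isUnit_det C).mp hC
  have hdet1 : B.det = A.det * (1 + Uᵀ * A⁻¹ * (U * C)).det := by
    rw [hBeq]
    exact Matrix.det_add_mul (U * C) Uᵀ hdetA
  have hAC : IsUnit (C⁻¹ + Uᵀ * A⁻¹ * U) := by
    have hfact : C⁻¹ + Uᵀ * A⁻¹ * U = C⁻¹ * (1 + C * (Uᵀ * A⁻¹ * U)) := by
      rw [Matrix.mul_add, Matrix.mul_one, ← Matrix.mul_assoc,
        Matrix.nonsing_inv_mul C hdetC, Matrix.one_mul]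
    have hcomm : (1 + C * (Uᵀ * A⁻¹ * U)).det = (1 + Uᵀ * A⁻¹ * U * C).det :=
      Matrix.det_one_add_mul_comm C (Uᵀ * A⁻¹ * U)
    have h1 : IsUnit (1 + Uᵀ * A⁻¹ * (U * C)).det := by
      have := hdet1
      have hd : IsUnit (A.det * (1 + Uᵀ * A⁻¹ * (U * C)).det) := this ▸ hdetB
      exact (isUnit_of_mul_isUnit_right hd)
    rw [Matrix.isUnit_iff_isUnit_det, hfact, Matrix.det_mul, hcomm]
    refine (Matrix.isUnit_nonsing_inv_det C hdetC).mul ?_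
    rwa [← Matrix.mul_assoc] at h1
  refine ⟨hAC, ?_⟩
  have hwood := Matrix.add_mul_mul_inv_eq_sub A U C Uᵀ hA hC hAC
  rw [hBeq, hwood]
end
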